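/- Let C > 0. For every n ∈ ℕ₀, the n-th derivative of g(t) = √t/(log √t)^C satisfies g^{(n)}(t) = [Γ(3/2)/Γ(3/2 - n)] · t^{1/2-n}/(log √t)^C · (1 + O(1/log t)) as t → ∞. -/

import Mathlib

open Real Filter Asymptotics

/-- The falling product `Γ(3/2)/Γ(3/2 - n) = (1/2)(-1/2)⋯(3/2 - n)`. -/
noncomputable def gammaRatio (n : ℕ) : ℝ :=
  ∏ i ∈ Finset.range n, ((3 : ℝ) / 2 - (i + 1))

lemma gammaRatio_ne_zero (n : ℕ) : gammaRatio n ≠ 0 := by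
  rw [gammaRatio, Finset.prod_ne_zero_iff]
  intro i _
  rcases Nat.eq_zero_or_pos i with h | h
  · subst h; norm_num
  · have : (1 : ℝ) ≤ i := by exact_mod_cast h
    intro hcon; linarith

lemma gammaRatio_succ (n : ℕ) :
    gammaRatio (n + 1) = gammaRatio n * ((1 : ℝ) / 2 - n) := by
  rw [gammaRatio, Finset.prod_range_succ, ← gammaRatio]
  ring_nf

lemma key (C : ℝ) (n : ℕ) : ∃ m : ℕ, ∃ a : ℕ → ℝ,
    a 0 = gammaRatio n ∧ (∀ k, m < k → a k = 0) ∧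
    ∀ t : ℝ, 1 < t →
      iteratedDeriv n (fun s : ℝ => Real.sqrt s / (Real.log (Real.sqrt s)) ^ C) t =
        ∑ k ∈ Finset.range (m + 1),
          a k * t ^ ((1 : ℝ) / 2 - n) * (Real.log t / 2) ^ (-C - k) := by
  induction n with
  | zero =>
    refine ⟨0, fun k => if k = 0 then 1 else 0, by simp [gammaRatio], ?_, ?_⟩
    · intro k hk
      show (if k = 0 then (1:ℝ) else 0) = 0
      rw [if_neg (by omega)]
    · intro t ht
      have ht0 : (0 : ℝ) < t := by linarith
      have hL : 0 < Real.log t / 2 := by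
        have := Real.log_pos ht; linarith
      rw [iteratedDeriv_zero, Finset.sum_range_one]
      beta_reduce
      rw [if_pos rfl, Nat.cast_zero, sub_zero,
        sub_zero, one_mul, Real.sqrt_eq_rpow, Real.log_rpow ht0,
        show (1:ℝ)/2 * Real.log t = Real.log t / 2 by ring,
        Real.rpow_neg hL.le, div_eq_mul_inv]
  | succ n ih =>
    obtain ⟨m, a, ha0, hz, hsum⟩ := ih
    refine ⟨m + 1, fun k => ((1 : ℝ) / 2 - n) * a k -
        ((C + k - 1) / 2) * (if k = 0 then 0 else a (k - 1)), ?_, ?_, ?_⟩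
    · simp [ha0, gammaRatio_succ, mul_comm]
    · intro k hk
      have h1 : a k = 0 := hz k (by omega)
      have h2 : k ≠ 0 := by omega
      have h3 : a (k - 1) = 0 := hz (k - 1) (by omega)
      simp [h1, h2, h3]
    · intro t ht
      have ht0 : (0 : ℝ) < t := by linarith
      have hL : 0 < Real.log t / 2 := by
        have := Real.log_pos ht; linarith
      -- derivative of the explicit sum
      set p : ℝ := (1 : ℝ) / 2 - n with hp
      have hderiv : ∀ k ∈ Finset.range (m + 1),
          HasDerivAt (fun x : ℝ => a k * x ^ p * (Real.log x / 2) ^ (-C - k))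
            (a k * (p * t ^ (p - 1)) * (Real.log t / 2) ^ (-C - k) +
              a k * t ^ p * ((t⁻¹ / 2) * (-C - k) * (Real.log t / 2) ^ (-C - k - 1))) t := by
        intro k _
        have h1 : HasDerivAt (fun x : ℝ => x ^ p) (p * t ^ (p - 1)) t :=
          Real.hasDerivAt_rpow_const (Or.inl ht0.ne')
        have h2 : HasDerivAt (fun x : ℝ => Real.log x / 2) (t⁻¹ / 2) t :=
          (Real.hasDerivAt_log ht0.ne').div_const 2
        have h3 := h2.rpow_const (p := -C - k) (Or.inl hL.ne')
        have h4 := (h1.const_mul (a k)).mul h3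
        exact h4
      have hS := (HasDerivAt.fun_sum hderiv).deriv
      have heq : iteratedDeriv n (fun s : ℝ => Real.sqrt s / (Real.log (Real.sqrt s)) ^ C) =ᶠ[nhds t]
          fun x : ℝ => ∑ k ∈ Finset.range (m + 1),
            a k * x ^ p * (Real.log x / 2) ^ (-C - k) := by
        filter_upwards [Ioi_mem_nhds ht] with x hx
        exact hsum x hx
      rw [iteratedDeriv_succ, heq.deriv_eq, hS]
      -- now identify the two sums
      have hsplit : ∑ k ∈ Finset.range (m + 1 + 1),
          (((1 : ℝ) / 2 - n) * a k - ((C + k - 1) / 2) * (if k = 0 then 0 else a (k - 1))) *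
            t ^ ((1 : ℝ) / 2 - (n + 1 : ℕ)) * (Real.log t / 2) ^ (-C - k) =
          (∑ k ∈ Finset.range (m + 1 + 1),
            ((1 : ℝ) / 2 - n) * a k * t ^ ((1 : ℝ) / 2 - (n + 1 : ℕ)) * (Real.log t / 2) ^ (-C - k)) -
          (∑ k ∈ Finset.range (m + 1 + 1),
            ((C + k - 1) / 2) * (if k = 0 then 0 else a (k - 1)) *
              t ^ ((1 : ℝ) / 2 - (n + 1 : ℕ)) * (Real.log t / 2) ^ (-C - k)) := by
        rw [← Finset.sum_sub_distrib]
        apply Finset.sum_congr rfl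
        intro k _
        ring
      rw [hsplit]
      rw [Finset.sum_range_succ (fun k => ((1 : ℝ) / 2 - n) * a k *
        t ^ ((1 : ℝ) / 2 - (n + 1 : ℕ)) * (Real.log t / 2) ^ (-C - k)),
        hz (m + 1) (lt_add_one m)]
      rw [Finset.sum_range_succ' (fun k => ((C + k - 1) / 2) * (if k = 0 then 0 else a (k - 1)) *
        t ^ ((1 : ℝ) / 2 - (n + 1 : ℕ)) * (Real.log t / 2) ^ (-C - k)) (m + 1)]
      simp only [if_pos rfl, if_true, Nat.add_sub_cancel, if_neg (Nat.succ_ne_zero _),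
        mul_zero, zero_mul, add_zero]
      rw [← Finset.sum_sub_distrib]
      apply Finset.sum_congr rfl
      intro k _
      have htp : t ^ (p - 1) = t ^ p * t⁻¹ := by
        rw [show p - 1 = p + (-1) by ring, Real.rpow_add ht0, Real.rpow_neg_one]
      have hexp1 : (1 : ℝ) / 2 - ((n + 1 : ℕ) : ℝ) = p - 1 := by
        push_cast [hp]; ring
      have hexp2 : -C - ((k + 1 : ℕ) : ℝ) = -C - (k : ℝ) - 1 := by
        push_cast; ring
      rw [hexp1, hexp2, htp]
      push_cast
      ring

/-- equation (5.13). Let `C > 0`. For every `n ∈ ℕ`, the `n`-th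
derivative of `g(t) = √t/(log √t)^C` satisfies
`g⁽ⁿ⁾(t) = [Γ(3/2)/Γ(3/2-n)] · t^{1/2-n}/(log √t)^C · (1 + O(1/log t))` as `t → ∞`. -/
theorem stmt7 (C : ℝ) (hC : 0 < C) (n : ℕ) :
    ∃ E : ℝ → ℝ, (E =O[atTop] fun t : ℝ => 1 / Real.log t) ∧
      ∀ᶠ t : ℝ in atTop,
        iteratedDeriv n (fun s : ℝ => Real.sqrt s / (Real.log (Real.sqrt s)) ^ C) t =
          gammaRatio n * t ^ ((1 : ℝ) / 2 - n) / (Real.log (Real.sqrt t)) ^ C *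
            (1 + E t) := by
  obtain ⟨m, a, ha0, hz, hsum⟩ := key C n
  have ha0ne : a 0 ≠ 0 := ha0 ▸ gammaRatio_ne_zero n
  refine ⟨fun t => ∑ k ∈ Finset.range m,
      (a (k + 1) / gammaRatio n) * (Real.log t / 2) ^ (-((k : ℝ) + 1)), ?_, ?_⟩
  · apply Asymptotics.IsBigO.fun_sum
    intro k _
    rw [Asymptotics.isBigO_iff]
    refine ⟨|a (k + 1) / gammaRatio n| * 2, ?_⟩
    filter_upwards [Real.tendsto_log_atTop.eventually_ge_atTop 2] with t hlog
    have hL1 : (1 : ℝ) ≤ Real.log t / 2 := by linarith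
    have hL0 : (0 : ℝ) < Real.log t / 2 := by linarith
    have hb : (Real.log t / 2) ^ (-((k : ℝ) + 1)) ≤ (Real.log t / 2) ^ (-1 : ℝ) := by
      apply Real.rpow_le_rpow_of_exponent_le hL1
      have : (0 : ℝ) ≤ k := Nat.cast_nonneg k
      linarith
    have hinv : (Real.log t / 2) ^ (-1 : ℝ) = 2 / Real.log t := by
      rw [Real.rpow_neg_one]
      field_simp
    rw [norm_mul, Real.norm_rpow_of_nonneg hL0.le]
    have hnorm : ‖Real.log t / 2‖ = Real.log t / 2 := by
      rw [Real.norm_eq_abs, abs_of_pos hL0]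
    rw [hnorm]
    have h1n : ‖(1 : ℝ) / Real.log t‖ = 1 / Real.log t := by
      rw [Real.norm_eq_abs, abs_of_pos (by positivity)]
    rw [h1n]
    calc ‖a (k + 1) / gammaRatio n‖ * (Real.log t / 2) ^ (-((k : ℝ) + 1))
        ≤ ‖a (k + 1) / gammaRatio n‖ * (2 / Real.log t) := by
          rw [← hinv]; exact mul_le_mul_of_nonneg_left hb (norm_nonneg _)
      _ = |a (k + 1) / gammaRatio n| * 2 * (1 / Real.log t) := by
          rw [Real.norm_eq_abs]; ring
  · filter_upwards [eventually_gt_atTop 1] with t ht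
    have ht0 : (0 : ℝ) < t := by linarith
    have hL : 0 < Real.log t / 2 := by
      have := Real.log_pos ht; linarith
    rw [hsum t ht, Real.log_sqrt ht0.le]
    have h1 : ∑ k ∈ Finset.range (m + 1),
        a k * t ^ ((1 : ℝ) / 2 - n) * (Real.log t / 2) ^ (-C - k) =
        t ^ ((1 : ℝ) / 2 - n) * (Real.log t / 2) ^ (-C) *
          ∑ k ∈ Finset.range (m + 1), a k * (Real.log t / 2) ^ (-(k : ℝ)) := by
      rw [Finset.mul_sum]
      apply Finset.sum_congr rfl
      intro k _
      rw [show -C - (k : ℝ) = -C + -(k : ℝ) by ring, Real.rpow_add hL]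
      ring
    rw [h1, Finset.sum_range_succ']
    simp only [Nat.cast_zero, neg_zero, Real.rpow_zero, mul_one]
    have h2 : ∑ k ∈ Finset.range m, a (k + 1) * (Real.log t / 2) ^ (-((k + 1 : ℕ) : ℝ)) =
        gammaRatio n * ∑ k ∈ Finset.range m,
          (a (k + 1) / gammaRatio n) * (Real.log t / 2) ^ (-((k : ℝ) + 1)) := by
      rw [Finset.mul_sum]
      apply Finset.sum_congr rfl
      intro k _
      rw [show -(((k + 1 : ℕ) : ℝ)) = -((k : ℝ) + 1) by push_cast; ring]
      field_simp
      rw [mul_div_assoc, div_self (gammaRatio_ne_zero n), mul_one]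
    rw [h2, ha0, Real.rpow_neg hL.le]
    field_simp
    ring
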